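/- Suppose y : [0,T) → ℝ is nonnegative, differentiable, y(0) = y₀ > 0, and satisfies y'(t) ≤ C·(1 + g(t)·(1 + log(1 + y(t))))·y(t) where g : [0,T) → ℝ is continuous, nonnegative, and ∫₀^T g(s) ds = M < ∞. Then y is bounded on [0,T); in fact y(t) ≤ y₀ · exp[C₁ exp(C₂ ∫₀ᵗ g(τ) dτ)] for constants C₁, C₂ depending only on C, M, y₀. -/

import Mathlib

/-!
With `u = 1 + log (1 + y)` the logarithmic nonlinearity becomes linear:
`u' = y' / (1 + y) ≤ C (1 + g) u`, because `y / (1 + y) ≤ 1` and `1 + g (1 + L) ≤ (1 + g)(1 + L)`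
for `L = log (1 + y) ≥ 0`. The linear Gronwall inequality with the continuous rate `C (1 + g)`
bounds `u (t)` by `u (0) · exp (C t + C ∫₀ᵗ g)`, and exponentiating once more gives the
double-exponential bound on `y`.
-/

open Set Real

theorem le_mul_exp_integral_of_hasDerivAt_le {f f' k : ℝ → ℝ} {a b : ℝ} (hab : a ≤ b)
    (hk : Continuous k) (hf : ContinuousOn f (Icc a b))
    (hf' : ∀ x ∈ Ioo a b, HasDerivAt f (f' x) x) (hle : ∀ x ∈ Ioo a b, f' x ≤ k x * f x) :
    f b ≤ f a * exp (∫ x in a..b, k x) := by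
  set K : ℝ → ℝ := fun u => ∫ x in a..u, k x
  have hK : ∀ x, HasDerivAt K (k x) x := fun x => (hk.integral_hasStrictDerivAt a x).hasDerivAt
  have hKcont : Continuous K := continuous_iff_continuousAt.2 fun x => (hK x).continuousAt
  -- `f · exp (-K)` is antitone since its derivative is `(f' - k f) · exp (-K) ≤ 0`.
  have hanti : AntitoneOn (fun x => f x * exp (-K x)) (Icc a b) := by
    refine antitoneOn_of_hasDerivWithinAt_nonpos (convex_Icc a b)
      (f' := fun x => f' x * exp (-K x) + f x * (exp (-K x) * -k x)) (hf.mul (hKcont.neg.rexp.continuousOn)) (fun x hx => ?_) (fun x hx => ?_)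
    · rw [interior_Icc] at hx
      exact ((hf' x hx).mul (hK x).neg.exp).hasDerivWithinAt
    · rw [interior_Icc] at hx
      nlinarith [hle x hx, exp_pos (-K x)]
  have hba := hanti ⟨le_rfl, hab⟩ ⟨hab, le_rfl⟩ hab
  simp only [K, intervalIntegral.integral_same, neg_zero, exp_zero, mul_one] at hba
  rwa [exp_neg, mul_inv_le_iff₀ (exp_pos _)] at hba

theorem div_one_add_le_mul_one_add_log {C g y y' : ℝ} (hC : 0 ≤ C) (hg : 0 ≤ g) (hy : 0 ≤ y)
    (h : y' ≤ C * (1 + g * (1 + log (1 + y))) * y) :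
    y' / (1 + y) ≤ C * (1 + g) * (1 + log (1 + y)) := by
  have hL : 0 ≤ log (1 + y) := log_nonneg (by linarith)
  rw [div_le_iff₀ (by linarith)]
  nlinarith [mul_nonneg (mul_nonneg hC hL) (add_nonneg zero_le_one hy),
    mul_nonneg (mul_nonneg hC hg) hL, mul_nonneg (mul_nonneg hC hg) hy]

theorem one_add_log_one_add_le_mul_exp_integral {C a b : ℝ} {g y : ℝ → ℝ} (hab : a ≤ b)
    (hC : 0 ≤ C) (hg : Continuous g) (hg₀ : ∀ x ∈ Ioo a b, 0 ≤ g x)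
    (hy₀ : ∀ x ∈ Icc a b, 0 ≤ y x) (hy : ∀ x ∈ Icc a b, DifferentiableAt ℝ y x)
    (hineq : ∀ x ∈ Ioo a b, deriv y x ≤ C * (1 + g x * (1 + log (1 + y x))) * y x) :
    1 + log (1 + y b) ≤ (1 + log (1 + y a)) * exp (∫ x in a..b, C * (1 + g x)) := by
  have hu : ∀ x ∈ Icc a b,
      HasDerivAt (fun x => 1 + log (1 + y x)) (deriv y x / (1 + y x)) x := fun x hx =>
    (((hy x hx).hasDerivAt.const_add 1).log (by linarith [hy₀ x hx])).const_add 1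
  exact le_mul_exp_integral_of_hasDerivAt_le hab (by fun_prop)
    (fun x hx => (hu x hx).continuousAt.continuousWithinAt)
    (fun x hx => hu x (Ioo_subset_Icc_self hx))
    (fun x hx => div_one_add_le_mul_one_add_log hC (hg₀ x hx)
      (hy₀ x (Ioo_subset_Icc_self hx)) (hineq x hx))

theorem exp_mul_le_mul_exp_add_abs_log {A e y₀ : ℝ} (hy₀ : 0 < y₀) (he : 1 ≤ e) :
    exp (A * e) ≤ y₀ * exp ((A + |log y₀|) * e) :=
  calc exp (A * e) ≤ exp (log y₀ + (A + |log y₀|) * e) :=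
        exp_le_exp.2 (by nlinarith [neg_abs_le (log y₀), abs_nonneg (log y₀)])
    _ = y₀ * exp ((A + |log y₀|) * e) := by rw [exp_add, exp_log hy₀]

theorem log_gronwall_bkm_general (T C y₀ : ℝ) (hC : 0 < C) (hy₀ : 0 < y₀)
    (g y : ℝ → ℝ) (hy0 : y 0 = y₀)
    (hgcont : Continuous g) (hgpos : ∀ t, 0 ≤ g t)
    (hypos : ∀ t ∈ Ico (0:ℝ) T, 0 ≤ y t)
    (hdiff : ∀ t ∈ Ico (0:ℝ) T, DifferentiableAt ℝ y t)
    (hineq : ∀ t ∈ Ico (0:ℝ) T,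
      deriv y t ≤ C * (1 + g t * (1 + Real.log (1 + y t))) * y t) :
    ∃ C₁ C₂ : ℝ, 0 < C₁ ∧ 0 < C₂ ∧
      ∀ t ∈ Ico (0:ℝ) T,
        y t ≤ y₀ * Real.exp (C₁ * Real.exp (C₂ * ∫ s in (0:ℝ)..t, g s)) := by
  have hu₀ : 0 < 1 + log (1 + y₀) := by linarith [log_nonneg (by linarith : (1:ℝ) ≤ 1 + y₀)]
  set A := (1 + log (1 + y₀)) * exp (C * T)
  refine ⟨A + |log y₀|, C, by positivity, hC, fun t ht => ?_⟩
  set G := ∫ s in (0:ℝ)..t, g s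
  have hsub : Icc 0 t ⊆ Ico 0 T := fun s hs => ⟨hs.1, hs.2.trans_lt ht.2⟩
  have hlog := one_add_log_one_add_le_mul_exp_integral ht.1 hC.le hgcont (fun x _ => hgpos x)
    (fun x hx => hypos x (hsub hx)) (fun x hx => hdiff x (hsub hx))
    (fun x hx => hineq x (hsub (Ioo_subset_Icc_self hx)))
  have hint : ∫ x in (0:ℝ)..t, C * (1 + g x) = C * t + C * G := by
    rw [intervalIntegral.integral_const_mul, intervalIntegral.integral_add intervalIntegrable_const
      (hgcont.intervalIntegrable _ _)]
    simp only [intervalIntegral.integral_const, sub_zero, smul_eq_mul, mul_one, G]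
    ring
  rw [hy0, hint] at hlog
  have hG : 0 ≤ G := intervalIntegral.integral_nonneg ht.1 fun s _ => hgpos s
  calc y t ≤ exp (log (1 + y t)) := by rw [exp_log (by linarith [hypos t ht])]; linarith
    _ ≤ exp (A * exp (C * G)) := by
        refine exp_le_exp.2 ?_
        calc log (1 + y t) ≤ (1 + log (1 + y₀)) * exp (C * t + C * G) := by linarith
          _ ≤ (1 + log (1 + y₀)) * exp (C * T + C * G) := by gcongr; exact ht.2.le
          _ = A * exp (C * G) := by rw [exp_add]; ring
    _ ≤ y₀ * exp ((A + |log y₀|) * exp (C * G)) :=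
        exp_mul_le_mul_exp_add_abs_log hy₀ (one_le_exp (by positivity))

theorem log_gronwall_bkm (T C M y₀ : ℝ) (hT : 0 < T) (hC : 0 < C) (hy₀ : 0 < y₀)
    (g y : ℝ → ℝ) (hy0 : y 0 = y₀)
    (hgcont : Continuous g) (hgpos : ∀ t, 0 ≤ g t)
    (hM : (∫ s in (0:ℝ)..T, g s) = M)
    (hypos : ∀ t ∈ Ico (0:ℝ) T, 0 ≤ y t)
    (hdiff : ∀ t ∈ Ico (0:ℝ) T, DifferentiableAt ℝ y t)
    (hineq : ∀ t ∈ Ico (0:ℝ) T,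
      deriv y t ≤ C * (1 + g t * (1 + Real.log (1 + y t))) * y t) :
    ∃ C₁ C₂ : ℝ, 0 < C₁ ∧ 0 < C₂ ∧
      ∀ t ∈ Ico (0:ℝ) T,
        y t ≤ y₀ * Real.exp (C₁ * Real.exp (C₂ * ∫ s in (0:ℝ)..t, g s)) :=
  log_gronwall_bkm_general T C y₀ hC hy₀ g y hy0 hgcont hgpos hypos hdiff hineq
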